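/- arXiv:2505.08518 — 2 statements merged into one kernel-verified Lean document; each statement's English description precedes it below -/
import Mathlib

section
/- Let A, E, B, d > 0, α_i, α_{i+1} > 0, and c > 1. Then the cubic equation [2(B+d)α_i α_{i+1}] β³ + [2(B+d)(A α_i + E α_{i+1}) − 2c α_i α_{i+1}] β² + [(1−2c)(A α_i + E α_{i+1}) + 2(B+d) A E] β + 2(1−c) A E = 0 has exactly one positive real root. -/
/-!
Dividing the cubic by `-2β(A + βα_{i+1})(E + βα_i)`, which is negative for `β > 0`, turns it into
the stationarity condition `f β = 0` with
`f β = (c - 1)/β - D + (α_{i+1}/(A + βα_{i+1}) + α_i/(E + βα_i))/2` and `D = B + d`.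
Each term of `f` is decreasing on `(0, ∞)`, and since the bracket lies strictly between `0` and `2/β`,
`(c - 1)/β - D < f β < c/β - D`; so `f` changes sign between `(c - 1)/D` and `c/D`, and the
intermediate value theorem gives exactly one zero.
-/

open Set

theorem IsPreconnected.existsUnique_eq_zero_of_strictAntiOn {s : Set ℝ} {f : ℝ → ℝ}
    (hs : IsPreconnected s) (hanti : StrictAntiOn f s) (hcont : ContinuousOn f s)
    {a b : ℝ} (ha : a ∈ s) (hb : b ∈ s) (hfa : 0 < f a) (hfb : f b < 0) :
    ∃! x, x ∈ s ∧ f x = 0 := by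
  obtain ⟨x, hxs, hx⟩ := hs.intermediate_value hb ha hcont ⟨hfb.le, hfa.le⟩
  exact ⟨x, ⟨hxs, hx⟩, fun y ⟨hys, hy⟩ => hanti.injOn hys hxs (hy.trans hx.symm)⟩

theorem strictAntiOn_div_add_mul {E α : ℝ} (hE : 0 < E) (hα : 0 < α) :
    StrictAntiOn (fun β => α / (E + β * α)) (Ici 0) := by
  intro x (hx : 0 ≤ x) y _ hxy
  have : 0 < E + x * α := by positivity
  dsimp only
  gcongr

theorem div_add_mul_lt_one_div {E α β : ℝ} (hE : 0 < E) (hα : 0 ≤ α) (hβ : 0 < β) :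
    α / (E + β * α) < 1 / β := by
  rw [div_lt_div_iff₀ (by positivity) hβ]
  linarith

namespace SppSbl

variable (A E D αi αi1 c : ℝ)

noncomputable def stationarity (β : ℝ) : ℝ :=
  (c - 1) / β - D + (αi1 / (A + β * αi1) + αi / (E + β * αi)) / 2

variable {A E D αi αi1 c}

theorem cubic_eq_neg_mul_stationarity {β : ℝ} (hβ : β ≠ 0) (hA : A + β * αi1 ≠ 0)
    (hE : E + β * αi ≠ 0) :
    (2*D*αi*αi1) * β^3
        + (2*D*(A*αi + E*αi1) - 2*c*αi*αi1) * β^2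
        + ((1-2*c)*(A*αi + E*αi1) + 2*D*A*E) * β
        + 2*(1-c)*A*E
      = -(2 * β * (A + β * αi1) * (E + β * αi)) * stationarity A E D αi αi1 c β := by
  unfold stationarity
  symm
  field_simp
  ring

theorem stationarity_bounds (hA : 0 < A) (hE : 0 < E) (hαi : 0 < αi) (hαi1 : 0 < αi1)
    {β : ℝ} (hβ : 0 < β) :
    (c - 1) / β - D < stationarity A E D αi αi1 c β ∧
      stationarity A E D αi αi1 c β < c / β - D := by
  have h₁ := div_add_mul_lt_one_div hA hαi1.le hβ
  have h₂ := div_add_mul_lt_one_div hE hαi.le hβ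
  have : 0 < αi1 / (A + β * αi1) := by positivity
  have : 0 < αi / (E + β * αi) := by positivity
  have hc : c / β = (c - 1) / β + 1 / β := by ring
  unfold stationarity
  constructor <;> linarith

theorem strictAntiOn_stationarity (hA : 0 < A) (hE : 0 < E) (hαi : 0 < αi) (hαi1 : 0 < αi1)
    (hc : 1 < c) : StrictAntiOn (stationarity A E D αi αi1 c) (Ioi 0) := by
  intro x (hx : 0 < x) y (hy : 0 < y) hxy
  have h₀ : (c - 1) / y < (c - 1) / x := div_lt_div_of_pos_left (by linarith) hx hxy
  have h₁ := strictAntiOn_div_add_mul hA hαi1 hx.le hy.le hxy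
  have h₂ := strictAntiOn_div_add_mul hE hαi hx.le hy.le hxy
  unfold stationarity
  dsimp only at h₁ h₂
  linarith

theorem continuousOn_stationarity (hA : 0 < A) (hE : 0 < E) (hαi : 0 < αi)
    (hαi1 : 0 < αi1) : ContinuousOn (stationarity A E D αi αi1 c) (Ioi 0) := by
  intro β (hβ : 0 < β)
  have : A + β * αi1 ≠ 0 := by positivity
  have : E + β * αi ≠ 0 := by positivity
  have : β ≠ 0 := hβ.ne'
  refine ContinuousAt.continuousWithinAt ?_
  unfold stationarity
  fun_prop (disch := assumption)

end SppSbl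

/-- The cubic from the SPP-SBL β-update has exactly one positive real root. -/
theorem cubic_unique_positive_root
    (A E B d αi αi1 c : ℝ)
    (hA : 0 < A) (hE : 0 < E) (hB : 0 < B) (hd : 0 < d)
    (hαi : 0 < αi) (hαi1 : 0 < αi1) (hc : 1 < c) :
    ∃! β : ℝ, 0 < β ∧
      (2*(B+d)*αi*αi1) * β^3
        + (2*(B+d)*(A*αi + E*αi1) - 2*c*αi*αi1) * β^2
        + ((1-2*c)*(A*αi + E*αi1) + 2*(B+d)*A*E) * β
        + 2*(1-c)*A*E = 0 := by
  set D := B + d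
  have hD : 0 < D := add_pos hB hd
  have hcubic_iff (β : ℝ) (hβ : 0 < β) :
      (2*D*αi*αi1) * β^3
        + (2*D*(A*αi + E*αi1) - 2*c*αi*αi1) * β^2
        + ((1-2*c)*(A*αi + E*αi1) + 2*D*A*E) * β
        + 2*(1-c)*A*E = 0 ↔ SppSbl.stationarity A E D αi αi1 c β = 0 := by
    have : 2 * β * (A + β * αi1) * (E + β * αi) ≠ 0 := by positivity
    rw [SppSbl.cubic_eq_neg_mul_stationarity hβ.ne' (by positivity) (by positivity),
      mul_eq_zero, neg_eq_zero, or_iff_right this]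
  have hlo := (SppSbl.stationarity_bounds (D := D) (c := c) hA hE hαi hαi1
    (by positivity : 0 < (c - 1) / D)).1
  rw [div_div_cancel₀ (sub_ne_zero.mpr hc.ne'), sub_self] at hlo
  have hhi := (SppSbl.stationarity_bounds (D := D) (c := c) hA hE hαi hαi1
    (by positivity : 0 < c / D)).2
  rw [div_div_cancel₀ (zero_lt_one.trans hc).ne', sub_self] at hhi
  rw [existsUnique_congr fun β => and_congr_right (hcubic_iff β)]
  exact isPreconnected_Ioi.existsUnique_eq_zero_of_strictAntiOn
    (SppSbl.strictAntiOn_stationarity hA hE hαi hαi1 hc)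
    (SppSbl.continuousOn_stationarity hA hE hαi hαi1)
    (by positivity : 0 < (c - 1) / D) (by positivity : 0 < c / D) hlo hhi
end

section
/- Let A, E, B, d, α_i, α_{i+1} > 0 and c > 1, and let β* be the unique positive real root of (c−1)/β − d + (1/2)[α_{i+1}/(A + β α_{i+1}) + α_i/(E + β α_i)] − B = 0. Then 0 < β* < c/d. -/
lemma div_add_mul_self_le_one_div {A α β : ℝ} (hA : 0 ≤ A) (hα : 0 < α) (hβ : 0 < β) :
    α / (A + β * α) ≤ 1 / β := by
  calc α / (A + β * α) ≤ α / (β * α) := by gcongr; linarith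
    _ = 1 / β := by field_simp

theorem root_upper_bound_general
    (A E B d αi αi1 c βs : ℝ)
    (hA : 0 < A) (hE : 0 < E) (hB : 0 < B) (hd : 0 < d)
    (hαi : 0 < αi) (hαi1 : 0 < αi1)
    (hβs : 0 < βs)
    (hroot : (c-1)/βs - d + (1/2) * (αi1/(A + βs*αi1) + αi/(E + βs*αi)) - B = 0) :
    0 < βs ∧ βs < c/d := by
  have hd_lt : d < c / βs :=
    calc d < d + B := by linarith
      _ = (c - 1) / βs + (1/2) * (αi1 / (A + βs * αi1) + αi / (E + βs * αi)) := by linarith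
      _ ≤ (c - 1) / βs + (1/2) * (1 / βs + 1 / βs) := by
        gcongr _ + (1/2) * ?_
        exact add_le_add (div_add_mul_self_le_one_div hA.le hαi1 hβs)
          (div_add_mul_self_le_one_div hE.le hαi hβs)
      _ = c / βs := by field_simp; ring
  exact ⟨hβs, (lt_div_comm₀ hd hβs).1 hd_lt⟩

/-- The unique positive root β* of the SPP-SBL stationarity equation satisfies 0 < β* < c/d. -/
theorem root_upper_bound
    (A E B d αi αi1 c βs : ℝ)
    (hA : 0 < A) (hE : 0 < E) (hB : 0 < B) (hd : 0 < d)
    (hαi : 0 < αi) (hαi1 : 0 < αi1) (hc : 1 < c)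
    (hβs : 0 < βs)
    (hroot : (c-1)/βs - d + (1/2) * (αi1/(A + βs*αi1) + αi/(E + βs*αi)) - B = 0)
    (huniq : ∀ β : ℝ, 0 < β →
      (c-1)/β - d + (1/2) * (αi1/(A + β*αi1) + αi/(E + β*αi)) - B = 0 → β = βs) :
    0 < βs ∧ βs < c/d :=
  root_upper_bound_general A E B d αi αi1 c βs hA hE hB hd hαi hαi1 hβs hroot
end
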